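/- Let φ(x) = (1/√(2π)) e^{−x²/2} denote the standard normal density. For every t ∈ ℝ and all σ_1, σ_2 > 0, one has |σ_1 · φ(t/σ_1) − σ_2 · φ(t/σ_2)| ≤ √(2/(eπ)) · |σ_1 − σ_2|. -/

import Mathlib

/-! The map `s ↦ s φ(t/s)` has derivative `φ(t/s) (1 + (t/s)²)`, and `φ(x) (1 + x²)` is maximal
at `x = ±1`, where it equals `2 φ(1) = √(2/(eπ))`; the mean value theorem on `(0, ∞)` concludes. -/

/-- The probability density function of the standard normal distribution. -/
noncomputable def stdNormalPDF (x : ℝ) : ℝ :=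
  (Real.sqrt (2 * Real.pi))⁻¹ * Real.exp (-x ^ 2 / 2)

open Real

lemma stdNormalPDF_nonneg (x : ℝ) : 0 ≤ stdNormalPDF x := by
  unfold stdNormalPDF; positivity

lemma hasDerivAt_stdNormalPDF (x : ℝ) :
    HasDerivAt stdNormalPDF (-x * stdNormalPDF x) x := by
  have h : HasDerivAt (fun y : ℝ => -y ^ 2 / 2) (-x) x :=
    ((hasDerivAt_pow 2 x).neg.div_const 2).congr_deriv (by ring)
  exact (h.exp.const_mul (√(2 * π))⁻¹).congr_deriv (by unfold stdNormalPDF; ring)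

lemma hasDerivAt_mul_stdNormalPDF_div (t : ℝ) {σ : ℝ} (hσ : σ ≠ 0) :
    HasDerivAt (fun s => s * stdNormalPDF (t / s))
      (stdNormalPDF (t / σ) * (1 + (t / σ) ^ 2)) σ := by
  have hdiv : HasDerivAt (fun s => t / s) (-t / σ ^ 2) σ := by
    simpa [div_eq_mul_inv, neg_div] using (hasDerivAt_inv hσ).const_mul t
  refine ((hasDerivAt_id' σ).mul ((hasDerivAt_stdNormalPDF (t / σ)).comp σ hdiv)).congr_deriv ?_
  simp only [Function.comp_apply]
  field_simp

lemma exp_neg_sq_half_mul_one_add_sq_le (x : ℝ) :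
    exp (-x ^ 2 / 2) * (1 + x ^ 2) ≤ 2 * exp (-(1 / 2)) :=
  calc exp (-x ^ 2 / 2) * (1 + x ^ 2)
      = 2 * (exp (-x ^ 2 / 2) * ((x ^ 2 - 1) / 2 + 1)) := by ring
    _ ≤ 2 * (exp (-x ^ 2 / 2) * exp ((x ^ 2 - 1) / 2)) := by
        gcongr; exact add_one_le_exp _
    _ = 2 * exp (-(1 / 2)) := by rw [← exp_add]; ring_nf

lemma stdNormalPDF_mul_one_add_sq_le (x : ℝ) :
    stdNormalPDF x * (1 + x ^ 2) ≤ 2 * stdNormalPDF 1 := by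
  rw [stdNormalPDF, stdNormalPDF, mul_assoc, mul_left_comm 2]
  refine mul_le_mul_of_nonneg_left ?_ (by positivity)
  simpa [neg_div] using exp_neg_sq_half_mul_one_add_sq_le x

lemma two_mul_stdNormalPDF_one : 2 * stdNormalPDF 1 = √(2 / (exp 1 * π)) := by
  rw [eq_comm, sqrt_eq_iff_eq_sq (by positivity) (mul_nonneg zero_le_two (stdNormalPDF_nonneg 1)),
    stdNormalPDF, mul_pow, mul_pow, inv_pow, sq_sqrt (by positivity), ← exp_nat_mul]
  norm_num [exp_neg]
  field_simp
  norm_num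

/-- For all `t` and `σ₁, σ₂ > 0`,
`|σ₁ φ(t/σ₁) - σ₂ φ(t/σ₂)| ≤ √(2/(e π)) |σ₁ - σ₂|`. -/
theorem pdf_scaled_lipschitz (t σ₁ σ₂ : ℝ) (h1 : 0 < σ₁) (h2 : 0 < σ₂) :
    |σ₁ * stdNormalPDF (t / σ₁) - σ₂ * stdNormalPDF (t / σ₂)| ≤
      Real.sqrt (2 / (Real.exp 1 * Real.pi)) * |σ₁ - σ₂| := by
  have hderiv_le (s : ℝ) : ‖stdNormalPDF (t / s) * (1 + (t / s) ^ 2)‖ ≤ √(2 / (exp 1 * π)) := by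
    rw [norm_of_nonneg (by have := stdNormalPDF_nonneg (t / s); positivity),
      ← two_mul_stdNormalPDF_one]
    exact stdNormalPDF_mul_one_add_sq_le _
  simpa only [norm_eq_abs] using (convex_Ioi (0 : ℝ)).norm_image_sub_le_of_norm_hasDerivWithin_le
    (fun s hs => (hasDerivAt_mul_stdNormalPDF_div t (ne_of_gt hs)).hasDerivWithinAt)
    (fun s _ => hderiv_le s) h2 h1
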